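/- For every positive integer n, the sum over all tuples (y₁, …, yₙ) of nonnegative integers satisfying Σᵢ₌₁ⁿ i·yᵢ = n of ( (Σᵢ yᵢ)! / (y₁! ⋯ yₙ!) ) · (−1)^{Σᵢ yᵢ} · Πᵢ₌₁ⁿ (binom(n, i))^{yᵢ}, computed in ℤ, equals (−1)ⁿ · binom(2n − 1, n − 1). -/

import Mathlib

/-!
Put `f = (1 + X)ⁿ - 1 = ∑ᵢ binom(n, i) Xⁱ`. Grouping the tuples by `k = ∑ yᵢ`, the multinomial
theorem turns the sum into `∑ₖ [Xⁿ] (-f)ᵏ`. As `X ∣ f`, the terms with `k > n` do not reach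
degree `n`, so this is the `n`-th coefficient of `1 / (1 + f) = (1 + X)⁻ⁿ`, namely
`(-1)ⁿ binom(2n - 1, n - 1)`.
-/

open Finset PowerSeries

namespace PowerSeries

section CommSemiring

variable {R : Type*} [CommSemiring R]

theorem coeff_sum_C_mul_X_pow_pow {ι : Type*} [DecidableEq ι] (s : Finset ι) (c : ι → R)
    (e : ι → ℕ) (k m : ℕ) :
    coeff m ((∑ i ∈ s, C (c i) * X ^ e i) ^ k) =
      ∑ y ∈ (s.piAntidiag k).filter (fun y => ∑ i ∈ s, e i * y i = m),
        (Nat.multinomial s y : R) * ∏ i ∈ s, c i ^ y i := by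
  rw [sum_pow_eq_sum_piAntidiag, map_sum, sum_filter]
  refine sum_congr rfl fun y _ => ?_
  simp only [mul_pow, ← map_pow, ← pow_mul, prod_mul_distrib, ← map_prod, prod_pow_eq_pow_sum]
  rw [← map_natCast (C (R := R)), ← mul_assoc, ← map_mul, coeff_C_mul, coeff_X_pow]
  simp_rw [mul_comm (e _), eq_comm (a := m)]
  split_ifs <;> simp

theorem one_add_sum_choose_mul_X_pow (n : ℕ) :
    1 + ∑ i : Fin n, C (n.choose ((i : ℕ) + 1) : R) * X ^ ((i : ℕ) + 1) = (1 + X : R⟦X⟧) ^ n := by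
  rw [add_comm 1 X, add_pow, sum_range_succ', Fin.sum_univ_eq_sum_range
    (fun i => C (n.choose (i + 1) : R) * X ^ (i + 1)), add_comm]
  simp [map_natCast, mul_comm]

end CommSemiring

section CommRing

variable {R : Type*} [CommRing R]

theorem mk_neg_one_pow_mul_add_choose_mul_one_add_X_pow (d : ℕ) :
    (mk fun m => (-1) ^ m * ((d + m).choose d : R)) * (1 + X) ^ (d + 1) = 1 := by
  have h := congrArg (rescale (-1 : R)) (mk_add_choose_mul_one_sub_pow_eq_one (S := R) d)
  rwa [map_mul, map_pow, map_sub, map_one, rescale_neg_one_X, sub_neg_eq_add, rescale_mk] at h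

theorem coeff_geom_sum_neg_eq_of_mul_eq_one {f g : R⟦X⟧} (hf : X ∣ f) (hg : g * (1 + f) = 1)
    {m N : ℕ} (hm : m < N) : coeff m (∑ k ∈ range N, (-f) ^ k) = coeff m g := by
  have hgeom : (∑ k ∈ range N, (-f) ^ k) * (1 + f) = 1 - (-f) ^ N := by
    linear_combination -geom_sum_mul (-f) N
  have htail : X ^ N ∣ (-f) ^ N * g := (pow_dvd_pow_of_dvd (dvd_neg.mpr hf) N).mul_right g
  calc coeff m (∑ k ∈ range N, (-f) ^ k)
      = coeff m ((∑ k ∈ range N, (-f) ^ k) * (1 + f) * g) := by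
        rw [mul_assoc, mul_comm (1 + f), hg, mul_one]
    _ = coeff m g - coeff m ((-f) ^ N * g) := by rw [hgeom, sub_mul, one_mul, map_sub]
    _ = coeff m g := by rw [X_pow_dvd_iff.mp htail m hm, sub_zero]

end CommRing

end PowerSeries

theorem Finset.sum_filter_weighted_sum_eq_sum_range_sum_piAntidiag {ι M : Type*} [Fintype ι]
    [DecidableEq ι] [AddCommMonoid M] (w : ι → ℕ) (hw : ∀ i, 1 ≤ w i) (m : ℕ)
    (F : (ι → ℕ) → M) :
    ∑ y ∈ (Fintype.piFinset fun _ => range (m + 1)).filter (fun y => ∑ i, w i * y i = m), F y =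
      ∑ k ∈ range (m + 1),
        ∑ y ∈ (univ.piAntidiag k).filter (fun y => ∑ i, w i * y i = m), F y := by
  have hle : ∀ y : ι → ℕ, ∀ j, y j ≤ ∑ i, w i * y i := fun y j =>
    (Nat.le_mul_of_pos_left _ (hw j)).trans
      (single_le_sum (f := fun i => w i * y i) (fun _ _ => Nat.zero_le _) (mem_univ j))
  have htotal : ∀ y : ι → ℕ, ∑ i, y i ≤ ∑ i, w i * y i := fun y =>
    sum_le_sum fun i _ => Nat.le_mul_of_pos_left _ (hw i)
  rw [← sum_fiberwise_of_maps_to (g := fun y => ∑ i, y i) fun y hy => by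
    rw [mem_filter] at hy
    exact mem_range_succ_iff.mpr (hy.2 ▸ htotal y)]
  refine sum_congr rfl fun k _ => sum_congr ?_ fun _ _ => rfl
  ext y
  simp only [mem_filter, Fintype.mem_piFinset, mem_range_succ_iff, mem_piAntidiag, mem_univ,
    implies_true, and_true]
  constructor
  · rintro ⟨⟨-, hy⟩, hk⟩
    exact ⟨hk, hy⟩
  · rintro ⟨hk, hy⟩
    exact ⟨⟨fun j => hy ▸ hle y j, hy⟩, hk⟩

theorem partition_multinomial_choose_self_sum (n : ℕ) (hn : 1 ≤ n) :
    ∑ y ∈ (Fintype.piFinset fun _ : Fin n => Finset.range (n + 1)).filter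
        (fun y => ∑ i : Fin n, ((i : ℕ) + 1) * y i = n),
      (Nat.multinomial Finset.univ y : ℤ) * (-1) ^ (∑ i, y i) *
        ∏ i : Fin n, ((n.choose ((i : ℕ) + 1) : ℤ)) ^ y i =
      (-1) ^ n * ((2 * n - 1).choose (n - 1) : ℤ) := by
  obtain ⟨d, rfl⟩ : ∃ d, n = d + 1 := ⟨n - 1, by omega⟩
  set f : ℤ⟦X⟧ := ∑ i : Fin (d + 1), C ((d + 1).choose ((i : ℕ) + 1) : ℤ) * X ^ ((i : ℕ) + 1)
  have hf : X ∣ f := dvd_sum fun i _ => (dvd_pow_self X (Nat.succ_ne_zero _)).mul_left _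
  have hinv := mk_neg_one_pow_mul_add_choose_mul_one_add_X_pow (R := ℤ) d
  rw [← one_add_sum_choose_mul_X_pow] at hinv
  have hsummand : ∀ k, ∑ y ∈ (univ.piAntidiag k).filter
      (fun y => ∑ i : Fin (d + 1), ((i : ℕ) + 1) * y i = d + 1),
      (Nat.multinomial univ y : ℤ) * (-1) ^ (∑ i, y i) *
        ∏ i : Fin (d + 1), ((d + 1).choose ((i : ℕ) + 1) : ℤ) ^ y i =
      coeff (d + 1) ((-f) ^ k) := fun k => by
    rw [neg_pow, show (-1 : ℤ⟦X⟧) ^ k = C ((-1) ^ k) by simp, coeff_C_mul,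
      coeff_sum_C_mul_X_pow_pow, mul_sum]
    refine sum_congr rfl fun y hy => ?_
    rw [(mem_piAntidiag.mp (mem_filter.mp hy).1).1]
    ring
  rw [sum_filter_weighted_sum_eq_sum_range_sum_piAntidiag _ (fun _ => Nat.le_add_left 1 _),
    sum_congr rfl fun k _ => hsummand k, ← map_sum,
    coeff_geom_sum_neg_eq_of_mul_eq_one hf hinv (Nat.lt_succ_self _), coeff_mk,
    show 2 * (d + 1) - 1 = d + (d + 1) by omega, Nat.add_sub_cancel]
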